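/- arXiv:2403.11279 — 8 statements merged into one kernel-verified Lean document; each statement's English description precedes it below -/
import Mathlib

section
/- Let O ⊆ ℝ³ be a nonempty compact convex set, let r_a > 0 and 0 < γ_s < γ, and assume infDist 0 O > r_a (the target lies strictly outside the r_a-dilated obstacle). Let J₀ := closure(N_{γ_s}(D_{r_a}(O)) ∩ R_l). Then for every h ∈ J₀ there exists ε̄ > 0 such that for every ε ∈ (0, ε̄] the set {x ∈ R_e : ‖h‖ − ‖x‖ ≥ ε} is nonempty. (This is the paper's Lemma 1, guaranteeing nonemptiness of the switching set ER^h for every hit point h.) -/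
/-!
Let `p` be the point of `O` nearest to the target `0` and `d = ‖p‖ = infDist 0 O`. By convexity
`O` lies in the half-space `⟪p, ·⟫ ≥ d²`, so the point `c • p` of the segment `[0, p]` is at distance
exactly `(1 - c) d` from `O`. Every landing point `y` has a point within `r_a` of `O` on `[0, y]`, hence
`‖y‖ ≥ d - r_a`, and so does every `h ∈ J₀`. The point `c • p` with `(1 - c) d = min d (r_a + γ)`
lies in `R_e`, since its whole segment to `0` stays farther than `r_a` from `O`, and has norm
`d - min d (r_a + γ) < d - r_a ≤ ‖h‖`.
-/

open Metric Set
open scoped RealInnerProductSpace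

abbrev E3 := EuclideanSpace ℝ (Fin 3)

section NearestPoint

variable {F : Type*} [NormedAddCommGroup F] [InnerProductSpace ℝ F] {O : Set F} {p : F}

theorem norm_sq_le_inner_of_norm_eq_infDist (hO : Convex ℝ O) (hp : p ∈ O)
    (hpd : infDist 0 O = ‖p‖) {o : F} (ho : o ∈ O) : ‖p‖ ^ 2 ≤ ⟪p, o⟫ := by
  have hmin : ‖0 - p‖ = ⨅ w : O, ‖0 - (w : F)‖ := by
    rw [zero_sub, norm_neg, ← hpd, infDist_eq_iInf]
    simp only [dist_eq_norm]
  have := (norm_eq_iInf_iff_real_inner_le_zero hO hp).1 hmin o ho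
  rw [zero_sub, inner_neg_left, inner_sub_right, real_inner_self_eq_norm_sq] at this
  linarith

theorem infDist_smul_of_norm_eq_infDist (hO : Convex ℝ O) (hp : p ∈ O)
    (hpd : infDist 0 O = ‖p‖) {c : ℝ} (hc : c ≤ 1) : infDist (c • p) O = (1 - c) * ‖p‖ := by
  refine le_antisymm ?_ ?_
  · calc infDist (c • p) O ≤ dist (c • p) p := infDist_le_dist_of_mem hp
      _ = (1 - c) * ‖p‖ := by
        rw [dist_comm, dist_eq_norm, show p - c • p = (1 - c) • p by rw [sub_smul, one_smul],
          norm_smul, Real.norm_of_nonneg (sub_nonneg.2 hc)]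
  rw [le_infDist ⟨p, hp⟩]
  intro o ho
  rcases (norm_nonneg p).eq_or_lt with hp0 | hp0
  · rw [← hp0, mul_zero]
    exact dist_nonneg
  have hCS := real_inner_le_norm p (o - c • p)
  rw [inner_sub_right, real_inner_smul_right, real_inner_self_eq_norm_sq] at hCS
  have := norm_sq_le_inner_of_norm_eq_infDist hO hp hpd ho
  rw [dist_comm, dist_eq_norm]
  exact le_of_mul_le_mul_right (by nlinarith) hp0

theorem le_infDist_of_mem_segment_zero_smul (hO : Convex ℝ O) (hp : p ∈ O)
    (hpd : infDist 0 O = ‖p‖) {c : ℝ} (hc0 : 0 ≤ c) (hc1 : c ≤ 1) {z : F}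
    (hz : z ∈ segment ℝ 0 (c • p)) : (1 - c) * ‖p‖ ≤ infDist z O := by
  obtain ⟨a, b, ha, hb, hab, rfl⟩ := hz
  rw [smul_zero, zero_add, smul_smul, infDist_smul_of_norm_eq_infDist hO hp hpd (by nlinarith)]
  exact mul_le_mul_of_nonneg_right (by nlinarith) (norm_nonneg p)

end NearestPoint

theorem infDist_zero_sub_le_norm_of_mem_segment {F : Type*} [SeminormedAddCommGroup F]
    [NormedSpace ℝ F] {O : Set F} {r : ℝ} {y z : F} (hz : z ∈ segment ℝ 0 y)
    (hzO : infDist z O ≤ r) : infDist 0 O - r ≤ ‖y‖ := by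
  have hzy : ‖z‖ ≤ ‖y‖ := by simpa using segment_subset_closedBall_left 0 y hz
  have := infDist_le_infDist_add_dist (x := (0 : F)) (y := z) (s := O)
  rw [dist_zero_left] at this
  linarith

/-- Paper's Lemma 1: for every hit point `h` in the jump set `J₀` of the move-to-target
mode there exists `ε̄ > 0` such that for every `ε ∈ (0, ε̄]` the switching set
`ER^h = {x ∈ R_e : ‖h‖ − ‖x‖ ≥ ε}` is nonempty. -/
theorem stmt0 (O : Set E3) (hOne : O.Nonempty) (hOcomp : IsCompact O) (hOconv : Convex ℝ O)
    (ra γs γ : ℝ) (hra : 0 < ra) (hγs : 0 < γs) (hγsγ : γs < γ)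
    (htarget : ra < infDist (0 : E3) O)
    (Rl : Set E3)
    (hRl : Rl = {x : E3 | (ra ≤ infDist x O ∧ infDist x O ≤ ra + γ) ∧
      (segment ℝ 0 x ∩ interior {y : E3 | infDist y O ≤ ra}).Nonempty})
    (Re : Set E3)
    (hRe : Re = {x : E3 | ra ≤ infDist x O ∧ infDist x O ≤ ra + γ} \ Rl)
    (J0 : Set E3)
    (hJ0 : J0 = closure ({x : E3 | ra ≤ infDist x O ∧ infDist x O ≤ ra + γs} ∩ Rl)) :
    ∀ h ∈ J0, ∃ εbar : ℝ, 0 < εbar ∧ ∀ ε : ℝ, 0 < ε → ε ≤ εbar →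
      {x ∈ Re | ε ≤ ‖h‖ - ‖x‖}.Nonempty := by
  intro h hJ
  subst hRl hRe hJ0
  obtain ⟨p, hp, hpd⟩ := hOcomp.exists_infDist_eq_dist hOne 0
  rw [dist_zero_left] at hpd
  have hh : infDist 0 O - ra ≤ ‖h‖ := by
    refine closure_minimal ?_ (isClosed_le continuous_const continuous_norm) hJ
    rintro y ⟨-, -, z, hz, hzD⟩
    exact infDist_zero_sub_le_norm_of_mem_segment hz
      (interior_subset (s := {y | infDist y O ≤ ra}) hzD)
  set m := min ‖p‖ (ra + γ)
  have hram : ra < m := lt_min (hpd ▸ htarget) (by linarith)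
  have hp0 : 0 < ‖p‖ := by linarith [min_le_left ‖p‖ (ra + γ)]
  set c := 1 - m / ‖p‖
  have hc0 : 0 ≤ c := sub_nonneg.2 ((div_le_one hp0).2 (min_le_left _ _))
  have hc1 : c ≤ 1 := sub_le_self _ (div_nonneg (by linarith) hp0.le)
  have hcm : (1 - c) * ‖p‖ = m := by rw [sub_sub_cancel, div_mul_cancel₀ _ hp0.ne']
  have hxh : ‖c • p‖ < ‖h‖ := by
    rw [norm_smul, Real.norm_of_nonneg hc0]
    linarith
  refine ⟨‖h‖ - ‖c • p‖, by linarith, fun ε _ hε ↦ ⟨c • p, ⟨?_, fun ⟨_, z, hz, hzD⟩ ↦ ?_⟩, hε⟩⟩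
  · rw [mem_ofPred_eq, infDist_smul_of_norm_eq_infDist hOconv hp hpd hc1, hcm]
    exact ⟨hram.le, min_le_right _ _⟩
  · have := le_infDist_of_mem_segment_zero_smul hOconv hp hpd hc0 hc1 hz
    have hzO : infDist z O ≤ ra := interior_subset (s := {y | infDist y O ≤ ra}) hzD
    linarith
end

section
/- Let O ⊆ ℝ³ be a nonempty compact convex set, let r_a > 0 and γ > 0, and assume infDist 0 O > r_a. Let p ∈ D_{r_a}(O) be a point with ‖p‖ = infDist 0 (D_{r_a}(O)) (a nearest point of the closed convex set D_{r_a}(O) to the origin). Then the segment [0,p] does not meet the interior of D_{r_a}(O); consequently p ∉ R_l, and since infDist p O = r_a, the point p belongs to the exit region R_e. (This is the claim in the proof of Lemma 1 that the projection of the target onto the dilated obstacle does not belong to the landing region.) -/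
open Metric Set
open scoped RealInnerProductSpace

/-!
A point `x ≠ y` of `interior D` lies in the closure of the open ball about `y` of radius
`dist y x`; were that ball disjoint from `D`, it would be disjoint from the open set
`interior D` and hence so would its closure. So `infDist y D < dist y x`, while every point of
the segment `[y, p]` is within `dist y p = infDist y D` of `y`: the segment misses `interior D`.
In particular the nearest point `p` is not interior to `{infDist · O ≤ r}`, which contains the
open set `{infDist · O < r}`, so `infDist p O = r`.
-/

section

variable {E : Type*} [NormedAddCommGroup E] [NormedSpace ℝ E]

theorem Metric.infDist_lt_dist_of_mem_interior {s : Set E} {x y : E}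
    (hx : x ∈ interior s) (hxy : x ≠ y) : infDist y s < dist y x := by
  by_contra! h
  have hdisj : Disjoint (ball y (dist y x)) (interior s) :=
    ((disjoint_ball_infDist (x := y) (s := s)).mono_left (ball_subset_ball h)).mono_right
      interior_subset
  have hclosure := hdisj.closure_left isOpen_interior
  rw [closure_ball y (dist_ne_zero.mpr hxy.symm)] at hclosure
  exact hclosure.notMem_of_mem_left (mem_closedBall'.mpr le_rfl) hx

theorem segment_inter_interior_eq_empty_of_dist_eq_infDist {s : Set E} {y p : E}
    (hy : y ∉ interior s) (hp : dist y p = infDist y s) :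
    segment ℝ y p ∩ interior s = ∅ := by
  refine eq_empty_iff_forall_notMem.mpr fun x ⟨hxseg, hxint⟩ => ?_
  have hxy : x ≠ y := fun h => hy (h ▸ hxint)
  have hxp : dist y x ≤ dist y p := by
    linarith [dist_add_dist_of_mem_segment hxseg, dist_nonneg (x := x) (y := p)]
  linarith [infDist_lt_dist_of_mem_interior hxint hxy]

end

theorem Metric.le_infDist_of_notMem_interior {α : Type*} [PseudoMetricSpace α] {O : Set α}
    {r : ℝ} {x : α} (hx : x ∉ interior {z | infDist z O ≤ r}) : r ≤ infDist x O := by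
  by_contra! h
  exact hx <| interior_maximal (fun _ hz => le_of_lt hz)
    (isOpen_lt (continuous_infDist_pt O) continuous_const) h

theorem stmt1_general (O : Set E3)
    (ra γ : ℝ) (hγ : 0 < γ)
    (htarget : ra < infDist (0 : E3) O)
    (D : Set E3) (hD : D = {x : E3 | infDist x O ≤ ra})
    (Rl : Set E3)
    (hRl : Rl = {x : E3 | (ra ≤ infDist x O ∧ infDist x O ≤ ra + γ) ∧
      (segment ℝ 0 x ∩ interior D).Nonempty})
    (Re : Set E3)
    (hRe : Re = {x : E3 | ra ≤ infDist x O ∧ infDist x O ≤ ra + γ} \ Rl)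
    (p : E3) (hpD : p ∈ D) (hpmin : ‖p‖ = infDist (0 : E3) D) :
    segment ℝ 0 p ∩ interior D = ∅ ∧ p ∉ Rl ∧ infDist p O = ra ∧ p ∈ Re := by
  subst hD
  have h0 : (0 : E3) ∉ interior {x : E3 | infDist x O ≤ ra} :=
    fun h => absurd (interior_subset h) htarget.not_ge
  have hseg := segment_inter_interior_eq_empty_of_dist_eq_infDist h0 (by rwa [dist_zero_left])
  have hpint : p ∉ interior {x : E3 | infDist x O ≤ ra} :=
    fun h => eq_empty_iff_forall_notMem.mp hseg p ⟨right_mem_segment ℝ 0 p, h⟩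
  have hpO : infDist p O = ra := le_antisymm hpD (le_infDist_of_notMem_interior hpint)
  have hpRl : p ∉ Rl := by
    rw [hRl]
    exact fun ⟨_, hne⟩ => hne.ne_empty hseg
  exact ⟨hseg, hpRl, hpO, hRe ▸ ⟨⟨hpO.ge, by linarith⟩, hpRl⟩⟩

/-- Claim in the proof of Lemma 1: the nearest point `p` of the `r_a`-dilated obstacle
to the target (origin) is such that the segment `[0,p]` misses the interior of the
dilation; hence `p ∉ R_l`, `infDist p O = r_a`, and `p` lies in the exit region `R_e`. -/
theorem stmt1 (O : Set E3) (hOne : O.Nonempty) (hOcomp : IsCompact O) (hOconv : Convex ℝ O)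
    (ra γ : ℝ) (hra : 0 < ra) (hγ : 0 < γ)
    (htarget : ra < infDist (0 : E3) O)
    (D : Set E3) (hD : D = {x : E3 | infDist x O ≤ ra})
    (Rl : Set E3)
    (hRl : Rl = {x : E3 | (ra ≤ infDist x O ∧ infDist x O ≤ ra + γ) ∧
      (segment ℝ 0 x ∩ interior D).Nonempty})
    (Re : Set E3)
    (hRe : Re = {x : E3 | ra ≤ infDist x O ∧ infDist x O ≤ ra + γ} \ Rl)
    (p : E3) (hpD : p ∈ D) (hpmin : ‖p‖ = infDist (0 : E3) D) :
    segment ℝ 0 p ∩ interior D = ∅ ∧ p ∉ Rl ∧ infDist p O = ra ∧ p ∈ Re :=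
  stmt1_general O ra γ hγ htarget D hD Rl hRl Re hRe p hpD hpmin
end

section
/- Let O ⊆ ℝ³ be a nonempty compact convex set, r > 0, a ∈ ℝ³ with ‖a‖ = 1, h ∈ ℝ³, and let H := {x ∈ ℝ³ : ⟪a, x − h⟫ = 0} be the hyperplane through h orthogonal to a. Assume H ∩ interior(D_r(O)) ≠ ∅. Then for every q ∈ H with infDist q O ≥ r, the vector q − Π(q,O) is not parallel to a; that is, P(a)(q − Π(q,O)) ≠ 0, equivalently ⟪q − Π(q,O), P(a)(q − Π(q,O))⟫ > 0. (This is the key geometric claim in the proof of Lemma 4 establishing that the obstacle-avoidance vector never vanishes on the hyperplane when the hyperplane cuts the interior of the dilated obstacle.) -/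
open Metric Set
open scoped RealInnerProductSpace

/-- Orthogonal projection onto the plane orthogonal to the unit vector `a`. -/
noncomputable def Pproj (a x : E3) : E3 := x - ⟪a, x⟫ • a

/-!
Suppose `q - p` were parallel to `a`. Since `p` is the nearest point of the convex set `O` to
`q`, the obstacle lies in the half-space `{x | ⟪q - p, x - p⟫ ≤ 0}`, so the distance to `O` is at
least the distance to that half-space. The hyperplane `H` is a level set of `⟪q - p, ·⟫`, and on
it this half-space distance equals `‖q - p‖ ≥ r`; but moving slightly from a point of
`H ∩ interior D_r(O)` in the direction `q - p` stays in `D_r(O)` while exceeding `r`.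
-/

section NearestPoint

variable {F : Type*} [NormedAddCommGroup F] [InnerProductSpace ℝ F]

theorem inner_sub_le_infDist_of_forall_inner_le {O : Set F} (hO : O.Nonempty) {u : F}
    (hu : ‖u‖ = 1) {c : ℝ} (hOc : ∀ o ∈ O, ⟪u, o⟫ ≤ c) (x : F) :
    ⟪u, x⟫ - c ≤ infDist x O := by
  refine (le_infDist hO).2 fun o ho => ?_
  calc ⟪u, x⟫ - c ≤ ⟪u, x - o⟫ := by rw [inner_sub_right]; linarith [hOc o ho]
    _ ≤ ‖u‖ * ‖x - o‖ := real_inner_le_norm _ _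
    _ = dist x o := by rw [hu, one_mul, dist_eq_norm]

theorem inner_sub_lt_of_mem_interior_infDist_le {O : Set F} (hO : O.Nonempty) {u : F}
    (hu : ‖u‖ = 1) {c : ℝ} (hOc : ∀ o ∈ O, ⟪u, o⟫ ≤ c) {r : ℝ} {z : F}
    (hz : z ∈ interior {x | infDist x O ≤ r}) :
    ⟪u, z⟫ - c < r := by
  obtain ⟨ε, hε, hball⟩ := Metric.mem_nhds_iff.mp (mem_interior_iff_mem_nhds.mp hz)
  have hmem : z + (ε / 2) • u ∈ {x | infDist x O ≤ r} := hball <| by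
    rw [mem_ball, dist_eq_norm, add_sub_cancel_left, norm_smul, hu, mul_one,
      Real.norm_of_nonneg (by positivity)]
    linarith
  have hstep : ⟪u, z + (ε / 2) • u⟫ = ⟪u, z⟫ + ε / 2 := by
    rw [inner_add_right, real_inner_smul_right, real_inner_self_eq_norm_sq, hu]
    ring
  have := inner_sub_le_infDist_of_forall_inner_le hO hu hOc (z + (ε / 2) • u)
  linarith [show infDist (z + (ε / 2) • u) O ≤ r from hmem]

theorem inner_sub_le_zero_of_norm_sub_eq_infDist {O : Set F} (hOconv : Convex ℝ O)
    {p q : F} (hp : p ∈ O) (hproj : ‖q - p‖ = infDist q O) :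
    ∀ o ∈ O, ⟪q - p, o - p⟫ ≤ 0 := by
  rw [← norm_eq_iInf_iff_real_inner_le_zero hOconv hp, hproj, infDist_eq_iInf]
  simp only [dist_eq_norm]

theorem inner_sub_neg_of_mem_interior_infDist_le {O : Set F} (hOconv : Convex ℝ O)
    {r : ℝ} (hr : 0 < r) {p q : F} (hp : p ∈ O) (hproj : ‖q - p‖ = infDist q O)
    (hqr : r ≤ infDist q O) {z : F} (hz : z ∈ interior {x | infDist x O ≤ r}) :
    ⟪q - p, z - q⟫ < 0 := by
  set d := ‖q - p‖
  have hd : 0 < d := hr.trans_le (hproj ▸ hqr)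
  set u := d⁻¹ • (q - p)
  have hu : ‖u‖ = 1 := by rw [norm_smul, norm_inv, norm_norm, inv_mul_cancel₀ hd.ne']
  have hOu : ∀ o ∈ O, ⟪u, o⟫ ≤ ⟪u, p⟫ := fun o ho => by
    have := inner_sub_le_zero_of_norm_sub_eq_infDist hOconv hp hproj o ho
    rw [inner_sub_right] at this
    simp only [u, real_inner_smul_left]
    exact mul_le_mul_of_nonneg_left (by linarith) (by positivity)
  have hzu := inner_sub_lt_of_mem_interior_infDist_le ⟨p, hp⟩ hu hOu hz
  have hqu : ⟪u, q⟫ - ⟪u, p⟫ = d := by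
    rw [← inner_sub_right, real_inner_smul_left, real_inner_self_eq_norm_sq]
    change d⁻¹ * d ^ 2 = d
    field_simp
  have : d⁻¹ * ⟪q - p, z - q⟫ < 0 := by
    rw [← real_inner_smul_left, inner_sub_right]
    linarith
  exact neg_of_mul_neg_right this (inv_nonneg.mpr hd.le)

end NearestPoint

theorem inner_Pproj_self {a : E3} (ha : ‖a‖ = 1) (v : E3) :
    ⟪v, Pproj a v⟫ = ‖Pproj a v‖ ^ 2 := by
  rw [← real_inner_self_eq_norm_sq]
  simp only [Pproj, inner_sub_left, inner_sub_right, real_inner_smul_left,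
    real_inner_smul_right, real_inner_self_eq_norm_sq, real_inner_comm a v, norm_smul, ha,
    Real.norm_eq_abs, mul_one, sq_abs]
  ring

theorem stmt2_general (O : Set E3) (hOconv : Convex ℝ O)
    (r : ℝ) (hr : 0 < r) (a h : E3) (ha : ‖a‖ = 1)
    (H : Set E3) (hH : H = {x : E3 | ⟪a, x - h⟫ = 0})
    (hHint : (H ∩ interior {x : E3 | infDist x O ≤ r}).Nonempty)
    (q : E3) (hqH : q ∈ H) (hqr : r ≤ infDist q O)
    (p : E3) (hp : p ∈ O) (hproj : ‖q - p‖ = infDist q O) :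
    Pproj a (q - p) ≠ 0 ∧ 0 < ⟪q - p, Pproj a (q - p)⟫ := by
  obtain ⟨z, hzH, hz⟩ := hHint
  have hne : Pproj a (q - p) ≠ 0 := by
    intro hpar
    have hqp : q - p = ⟪a, q - p⟫ • a := sub_eq_zero.mp hpar
    subst hH
    have hzq : ⟪a, z - q⟫ = 0 := by
      rw [← sub_sub_sub_cancel_right z q h, inner_sub_right, hzH, hqH, sub_zero]
    have := inner_sub_neg_of_mem_interior_infDist_le hOconv hr hp hproj hqr hz
    rw [hqp, real_inner_smul_left, hzq, mul_zero] at this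
    exact this.false
  exact ⟨hne, inner_Pproj_self ha (q - p) ▸ pow_pos (norm_pos_iff.mpr hne) 2⟩

/-- Key geometric claim in the proof of Lemma 4: if the hyperplane `H` through `h`
orthogonal to `a` meets the interior of the `r`-dilated obstacle, then for every point
`q ∈ H` outside the open dilation, the vector from its projection `p = Π(q,O)` to `q`
is not parallel to `a`: `P(a)(q − p) ≠ 0` and `⟪q − p, P(a)(q − p)⟫ > 0`. -/
theorem stmt2 (O : Set E3) (hOne : O.Nonempty) (hOcomp : IsCompact O) (hOconv : Convex ℝ O)
    (r : ℝ) (hr : 0 < r) (a h : E3) (ha : ‖a‖ = 1)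
    (H : Set E3) (hH : H = {x : E3 | ⟪a, x - h⟫ = 0})
    (hHint : (H ∩ interior {x : E3 | infDist x O ≤ r}).Nonempty)
    (q : E3) (hqH : q ∈ H) (hqr : r ≤ infDist q O)
    (p : E3) (hp : p ∈ O) (hproj : ‖q - p‖ = infDist q O) :
    Pproj a (q - p) ≠ 0 ∧ 0 < ⟪q - p, Pproj a (q - p)⟫ :=
  stmt2_general O hOconv r hr a h ha H hH hHint q hqH hqr p hp hproj
end

section
/- Let O ⊆ ℝ³ be a nonempty compact convex set, r > 0, and x ∈ ℝ³ with infDist x O = r. Then every vector v ∈ ℝ³ with ⟪v, x − Π(x,O)⟫ ≥ 0 belongs to the tangent cone tangentConeAt ℝ {y ∈ ℝ³ : infDist y O ≥ r} x. (This is the tangent-cone inclusion at the inner boundary of the neighborhood N_γ(D_r(O)) used in the viability arguments of Lemmas 3 and 4.) -/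
open Metric Set
open scoped RealInnerProductSpace

/-! The nearest point `p` of a convex set `O` to `x` satisfies `⟪x - p, q - p⟫ ≤ 0` for all
`q ∈ O`. Hence for any `y` in the half-space `0 ≤ ⟪y - x, x - p⟫` and any `q ∈ O`,
`⟪y - q, x - p⟫ ≥ ‖x - p‖²`, and Cauchy–Schwarz gives `‖y - q‖ ≥ ‖x - p‖`. So the whole
half-space stays at distance at least `infDist x O` from `O`; it contains the segment from `x`
to `x + v`, which puts `v` in the tangent cone. -/

section NearestPoint

variable {F : Type*} [NormedAddCommGroup F] [InnerProductSpace ℝ F]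
  {O : Set F} {x p : F}

theorem inner_sub_nearest_nonpos (hO : Convex ℝ O) (hp : p ∈ O)
    (hproj : ‖x - p‖ = infDist x O) {q : F} (hq : q ∈ O) : ⟪x - p, q - p⟫ ≤ 0 := by
  refine (norm_eq_iInf_iff_real_inner_le_zero hO hp).mp ?_ q hq
  simpa only [infDist_eq_iInf, dist_eq_norm] using hproj

theorem norm_sub_nearest_le_of_inner_nonneg (hO : Convex ℝ O) (hp : p ∈ O)
    (hproj : ‖x - p‖ = infDist x O) {y q : F} (hy : 0 ≤ ⟪y - x, x - p⟫) (hq : q ∈ O) :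
    ‖x - p‖ ≤ ‖y - q‖ := by
  have hsplit : ⟪y - q, x - p⟫ = ⟪y - x, x - p⟫ + ‖x - p‖ ^ 2 - ⟪x - p, q - p⟫ := by
    rw [← real_inner_self_eq_norm_sq, real_inner_comm (q - p) (x - p), ← inner_add_left,
      ← inner_sub_left]
    congr 1
    abel
  have hlower : ‖x - p‖ ^ 2 ≤ ⟪y - q, x - p⟫ := by
    linarith [inner_sub_nearest_nonpos hO hp hproj hq]
  have hupper : ⟪y - q, x - p⟫ ≤ ‖y - q‖ * ‖x - p‖ := real_inner_le_norm _ _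
  rcases (norm_nonneg (x - p)).eq_or_lt with hzero | hpos
  · rw [← hzero]
    exact norm_nonneg _
  · nlinarith

theorem infDist_le_infDist_of_inner_nonneg (hO : Convex ℝ O) (hp : p ∈ O)
    (hproj : ‖x - p‖ = infDist x O) {y : F} (hy : 0 ≤ ⟪y - x, x - p⟫) :
    infDist x O ≤ infDist y O := by
  rw [le_infDist ⟨p, hp⟩]
  intro q hq
  rw [← hproj, dist_eq_norm]
  exact norm_sub_nearest_le_of_inner_nonneg hO hp hproj hy hq

theorem mem_tangentConeAt_infDist_superlevel (hO : Convex ℝ O) (hp : p ∈ O)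
    (hproj : ‖x - p‖ = infDist x O) {v : F} (hv : 0 ≤ ⟪v, x - p⟫) :
    v ∈ tangentConeAt ℝ {y | infDist x O ≤ infDist y O} x := by
  have hsegment : segment ℝ x (x + v) ⊆ {y | infDist x O ≤ infDist y O} := by
    rw [segment_eq_image', add_sub_cancel_left]
    rintro _ ⟨t, ⟨ht, -⟩, rfl⟩
    refine infDist_le_infDist_of_inner_nonneg hO hp hproj ?_
    rw [add_sub_cancel_left, real_inner_smul_left]
    exact mul_nonneg ht hv
  simpa using mem_tangentConeAt_of_segment_subset hsegment

end NearestPoint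

theorem stmt6_general (O : Set E3) (hOconv : Convex ℝ O)
    (r : ℝ) (x : E3) (hx : infDist x O = r)
    (p : E3) (hp : p ∈ O) (hproj : ‖x - p‖ = infDist x O)
    (v : E3) (hv : 0 ≤ ⟪v, x - p⟫) :
    v ∈ tangentConeAt ℝ {y : E3 | r ≤ infDist y O} x :=
  hx ▸ mem_tangentConeAt_infDist_superlevel hOconv hp hproj hv

/-- Tangent-cone inclusion at the inner boundary of the neighborhood `N_γ(D_r(O))`
(Lemmas 3 and 4): at a point `x` with `infDist x O = r`, every vector `v` with
`⟪v, x − Π(x,O)⟫ ≥ 0` lies in the tangent cone of `{y : infDist y O ≥ r}` at `x`. -/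
theorem stmt6 (O : Set E3) (hOne : O.Nonempty) (hOcomp : IsCompact O) (hOconv : Convex ℝ O)
    (r : ℝ) (hr : 0 < r) (x : E3) (hx : infDist x O = r)
    (p : E3) (hp : p ∈ O) (hproj : ‖x - p‖ = infDist x O)
    (v : E3) (hv : 0 ≤ ⟪v, x - p⟫) :
    v ∈ tangentConeAt ℝ {y : E3 | r ≤ infDist y O} x :=
  stmt6_general O hOconv r x hx p hp hproj v hv
end

section
/- Let O ⊆ ℝ³ be a nonempty compact convex set, r > 0, and x ∈ ℝ³ with infDist x O = r. Then every vector v ∈ ℝ³ with ⟪v, x − Π(x,O)⟫ ≤ 0 belongs to the tangent cone tangentConeAt ℝ {y ∈ ℝ³ : infDist y O ≤ r} x. (This is the tangent-cone inclusion at the outer boundary of the neighborhood N_γ(D_r(O)) used in the viability arguments of Lemmas 3 and 4; note that {y : infDist y O ≤ r} is a convex body containing the closed ball of radius r around Π(x,O).) -/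
/-!
The sublevel set `{y | infDist y O ≤ r}` contains the closed ball of radius `r` about the
nearest point `p`, and `x` lies on the boundary sphere of that ball, so it suffices to compute
the tangent cone of a ball. A direction `v` pointing strictly inwards (`⟪v, x - p⟫ < 0`) keeps
`x + t • v` inside the ball for small `t > 0`; a tangential direction is a limit of inward ones,
and tangent cones are closed.
-/

open Metric Set Filter
open scoped RealInnerProductSpace Topology

theorem isClosed_tangentConeAt {𝕜 E : Type*} [TopologicalSpace 𝕜] [AddCommGroup E] [SMul 𝕜 E]
    [TopologicalSpace E] (s : Set E) (x : E) : IsClosed (tangentConeAt 𝕜 s x) := by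
  rw [tangentConeAt_eq_biInter_closure]
  exact isClosed_biInter fun _ _ ↦ isClosed_closure

theorem closedBall_subset_setOf_infDist_le {α : Type*} [PseudoMetricSpace α] {O : Set α} {p : α}
    (hp : p ∈ O) (r : ℝ) : closedBall p r ⊆ {y | infDist y O ≤ r} :=
  fun _ hy ↦ (infDist_le_dist_of_mem hp).trans hy

section InnerProductSpace

variable {F : Type*} [NormedAddCommGroup F] [InnerProductSpace ℝ F] {p x v : F} {r : ℝ}

theorem norm_add_smul_sub_sq (t : ℝ) :
    ‖x + t • v - p‖ ^ 2 = ‖x - p‖ ^ 2 + 2 * t * ⟪v, x - p⟫ + t ^ 2 * ‖v‖ ^ 2 := by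
  rw [show x + t • v - p = (x - p) + t • v by abel, norm_add_sq_real, real_inner_smul_right,
    real_inner_comm, norm_smul, Real.norm_eq_abs, mul_pow, sq_abs]
  ring

theorem mem_tangentConeAt_closedBall_of_inner_neg (hx : ‖x - p‖ ≤ r) (hv : ⟪v, x - p⟫ < 0) :
    v ∈ tangentConeAt ℝ (closedBall p r) x := by
  refine mem_tangentConeAt_of_add_smul_mem (tendsto_id'.mpr <| nhdsGT_le_nhdsNE 0) ?_
  have hδ : 0 < -2 * ⟪v, x - p⟫ / (‖v‖ ^ 2 + 1) := by
    apply div_pos <;> nlinarith [sq_nonneg ‖v‖]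
  filter_upwards [Ioo_mem_nhdsGT hδ] with t ⟨ht₀, htδ⟩
  have hdecr : 2 * t * ⟪v, x - p⟫ + t ^ 2 * ‖v‖ ^ 2 ≤ 0 := by
    rw [lt_div_iff₀ (by positivity)] at htδ
    nlinarith [sq_nonneg ‖v‖]
  have hsq : ‖x + t • v - p‖ ^ 2 ≤ r ^ 2 := by
    rw [norm_add_smul_sub_sq]
    nlinarith [norm_nonneg (x - p)]
  rw [id, mem_closedBall, dist_eq_norm]
  exact abs_le_of_sq_le_sq' hsq ((norm_nonneg _).trans hx) |>.2

theorem mem_tangentConeAt_closedBall_of_inner_nonpos (hxp : x ≠ p) (hx : ‖x - p‖ ≤ r)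
    (hv : ⟪v, x - p⟫ ≤ 0) : v ∈ tangentConeAt ℝ (closedBall p r) x := by
  have hlim : Tendsto (fun ε : ℝ ↦ v - ε • (x - p)) (𝓝[>] 0) (𝓝 v) := by
    have : Tendsto (fun ε : ℝ ↦ v - ε • (x - p)) (𝓝 0) (𝓝 (v - (0 : ℝ) • (x - p))) :=
      tendsto_const_nhds.sub (tendsto_id.smul_const _)
    simpa using this.mono_left nhdsWithin_le_nhds
  refine (isClosed_tangentConeAt _ _).mem_of_tendsto hlim ?_
  filter_upwards [self_mem_nhdsWithin] with ε (hε : 0 < ε)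
  refine mem_tangentConeAt_closedBall_of_inner_neg hx ?_
  have : 0 < ‖x - p‖ ^ 2 := by positivity [sub_ne_zero.mpr hxp]
  rw [inner_sub_left, real_inner_smul_left, real_inner_self_eq_norm_sq]
  nlinarith

end InnerProductSpace

theorem stmt7_general (O : Set E3)
    (r : ℝ) (hr : 0 < r) (x : E3) (hx : infDist x O = r)
    (p : E3) (hp : p ∈ O) (hproj : ‖x - p‖ = infDist x O)
    (v : E3) (hv : ⟪v, x - p⟫ ≤ 0) :
    v ∈ tangentConeAt ℝ {y : E3 | infDist y O ≤ r} x := by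
  have hxp : ‖x - p‖ = r := hproj.trans hx
  have hne : x ≠ p := by
    rintro rfl
    rw [sub_self, norm_zero] at hxp
    exact hr.ne hxp
  exact tangentConeAt_mono (closedBall_subset_setOf_infDist_le hp r)
    (mem_tangentConeAt_closedBall_of_inner_nonpos hne hxp.le hv)

/-- Tangent-cone inclusion at the outer boundary of the neighborhood `N_γ(D_r(O))`
(Lemmas 3 and 4): at a point `x` with `infDist x O = r`, every vector `v` with
`⟪v, x − Π(x,O)⟫ ≤ 0` lies in the tangent cone of `{y : infDist y O ≤ r}` at `x`. -/
theorem stmt7 (O : Set E3) (hOne : O.Nonempty) (hOcomp : IsCompact O) (hOconv : Convex ℝ O)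
    (r : ℝ) (hr : 0 < r) (x : E3) (hx : infDist x O = r)
    (p : E3) (hp : p ∈ O) (hproj : ‖x - p‖ = infDist x O)
    (v : E3) (hv : ⟪v, x - p⟫ ≤ 0) :
    v ∈ tangentConeAt ℝ {y : E3 | infDist y O ≤ r} x :=
  stmt7_general O r hr x hx p hp hproj v hv
end

section
/- Let O ⊆ ℝ³ be a nonempty compact convex set, r > 0, and x ∈ ℝ³ with infDist x O = r. If the segment [0,x] from the origin to x does not meet the open dilation {y ∈ ℝ³ : infDist y O < r} (i.e., x lies in the exit region, so the straight path to the target does not cross the dilated obstacle), then ⟪x, x − Π(x,O)⟫ ≤ 0. Equivalently, the move-to-target control u = −κ_s x with κ_s > 0 satisfies ⟪u, x − Π(x,O)⟫ ≥ 0. (This is the viability claim for the move-to-target mode at the boundary of the dilated obstacle in the proof of Lemma 3.) -/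
/-!
Every point `y` of the segment `[0, x]` satisfies `infDist y O ≥ r = ‖x - p‖`, and
`infDist y O ≤ ‖y - p‖` because `p ∈ O`. So `x` is a nearest point of the convex set `[0, x]`
to `p`, and the variational inequality for nearest points in convex sets, tested at `0`,
gives `⟪p - x, 0 - x⟫ ≤ 0`, i.e. `⟪x, x - p⟫ ≤ 0`.
-/

open Metric Set
open scoped RealInnerProductSpace

theorem Convex.real_inner_sub_le_zero_of_isMinOn {F : Type*} [NormedAddCommGroup F]
    [InnerProductSpace ℝ F] {K : Set F} (hK : Convex ℝ K) {u v w : F} (hv : v ∈ K)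
    (hmin : IsMinOn (fun y => ‖u - y‖) K v) (hw : w ∈ K) : ⟪u - v, w - v⟫ ≤ 0 := by
  have : Nonempty K := ⟨⟨v, hv⟩⟩
  have hinf : ‖u - v‖ = ⨅ y : K, ‖u - y‖ :=
    le_antisymm (le_ciInf fun y => isMinOn_iff.mp hmin y y.2)
      (ciInf_le ⟨0, forall_mem_range.mpr fun _ => norm_nonneg _⟩ (⟨v, hv⟩ : K))
  exact (norm_eq_iInf_iff_real_inner_le_zero hK hv).mp hinf w hw

theorem stmt8_general (O : Set E3)
    (r : ℝ) (x : E3) (hx : infDist x O = r)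
    (hseg : segment ℝ 0 x ∩ {y : E3 | infDist y O < r} = ∅)
    (p : E3) (hp : p ∈ O) (hproj : ‖x - p‖ = infDist x O) :
    ⟪x, x - p⟫ ≤ 0 ∧ ∀ κs : ℝ, 0 < κs → 0 ≤ ⟪-(κs • x), x - p⟫ := by
  have hmin : IsMinOn (fun y => ‖p - y‖) (segment ℝ 0 x) x := by
    refine isMinOn_iff.mpr fun y hy => ?_
    have hry : r ≤ infDist y O := not_lt.mp fun hlt => hseg.subset ⟨hy, hlt⟩
    calc ‖p - x‖ = infDist x O := by rw [norm_sub_rev, hproj]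
      _ ≤ infDist y O := hx ▸ hry
      _ ≤ dist y p := infDist_le_dist_of_mem hp
      _ = ‖p - y‖ := by rw [dist_eq_norm, norm_sub_rev]
  have hinner : ⟪x, x - p⟫ ≤ 0 := by
    have h := (convex_segment 0 x).real_inner_sub_le_zero_of_isMinOn
      (right_mem_segment ℝ 0 x) hmin (left_mem_segment ℝ 0 x)
    rwa [zero_sub, inner_neg_right, ← inner_neg_left, neg_sub, real_inner_comm] at h
  refine ⟨hinner, fun κs hκs => ?_⟩
  rw [inner_neg_left, real_inner_smul_left]
  nlinarith

/-- Viability claim for the move-to-target mode at the boundary of the dilated obstacle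
(proof of Lemma 3): if `infDist x O = r` and the segment `[0,x]` does not meet the open
dilation `{y : infDist y O < r}`, then `⟪x, x − Π(x,O)⟫ ≤ 0`; equivalently the control
`u = −κ_s x` with `κ_s > 0` satisfies `⟪u, x − Π(x,O)⟫ ≥ 0`. -/
theorem stmt8 (O : Set E3) (hOne : O.Nonempty) (hOcomp : IsCompact O) (hOconv : Convex ℝ O)
    (r : ℝ) (hr : 0 < r) (x : E3) (hx : infDist x O = r)
    (hseg : segment ℝ 0 x ∩ {y : E3 | infDist y O < r} = ∅)
    (p : E3) (hp : p ∈ O) (hproj : ‖x - p‖ = infDist x O) :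
    ⟪x, x - p⟫ ≤ 0 ∧ ∀ κs : ℝ, 0 < κs → 0 ≤ ⟪-(κs • x), x - p⟫ :=
  stmt8_general O r x hx hseg p hp hproj
end

section
/- Let O ⊆ ℝ³ be a nonempty compact convex set, let r_a > 0 and 0 < γ_s < γ, and assume infDist 0 O > r_a. Define the move-to-target flow set F₀ := {x ∈ ℝ³ : infDist x O ≥ r_a + γ_s} ∪ R_e and the move-to-target jump set J₀ := closure(N_{γ_s}(D_{r_a}(O)) ∩ R_l). Then F₀ ∪ J₀ = {x ∈ ℝ³ : infDist x O ≥ r_a}, i.e. the flow and jump sets of the move-to-target mode together cover exactly the robot-centered obstacle-free workspace. (This is the covering identity F₀^W ∪ J₀^W = W_{r_a} established in the proof of Lemma 3, stated for a single obstacle in the whole-space workspace.) -/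
open Metric Set
open scoped RealInnerProductSpace

theorem stmt9_general (O : Set E3)
    (ra γs γ : ℝ) (hγs : 0 < γs) (hγsγ : γs < γ)
    (Rl : Set E3)
    (hRl : Rl = {x : E3 | (ra ≤ infDist x O ∧ infDist x O ≤ ra + γ) ∧
      (segment ℝ 0 x ∩ interior {y : E3 | infDist y O ≤ ra}).Nonempty})
    (Re : Set E3)
    (hRe : Re = {x : E3 | ra ≤ infDist x O ∧ infDist x O ≤ ra + γ} \ Rl)
    (F0 : Set E3) (hF0 : F0 = {x : E3 | ra + γs ≤ infDist x O} ∪ Re)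
    (J0 : Set E3)
    (hJ0 : J0 = closure ({x : E3 | ra ≤ infDist x O ∧ infDist x O ≤ ra + γs} ∩ Rl)) :
    F0 ∪ J0 = {x : E3 | ra ≤ infDist x O} := by
  subst hRl hRe hF0 hJ0
  have hclosed : IsClosed {x : E3 | ra ≤ infDist x O} :=
    isClosed_le continuous_const (continuous_infDist_pt O)
  refine Subset.antisymm ?_ fun x hx => ?_
  · rintro x ((hfar | hexit) | hjump)
    · exact (le_add_of_nonneg_right hγs.le).trans hfar
    · exact hexit.1.1
    · exact closure_minimal (fun y hy => hy.1.1) hclosed hjump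
  obtain hfar | hnear := le_or_gt (ra + γs) (infDist x O)
  · exact Or.inl (Or.inl hfar)
  have hband : infDist x O ≤ ra + γ := by linarith
  by_cases hland : (segment ℝ 0 x ∩ interior {y : E3 | infDist y O ≤ ra}).Nonempty
  · exact Or.inr (subset_closure ⟨⟨hx, hnear.le⟩, ⟨hx, hband⟩, hland⟩)
  · exact Or.inl (Or.inr ⟨⟨hx, hband⟩, fun hl => hland hl.2⟩)

/-- Covering identity `F₀^W ∪ J₀^W = W_{r_a}` from the proof of Lemma 3: the flow and
jump sets of the move-to-target mode together cover exactly the robot-centered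
obstacle-free workspace. -/
theorem stmt9 (O : Set E3) (hOne : O.Nonempty) (hOcomp : IsCompact O) (hOconv : Convex ℝ O)
    (ra γs γ : ℝ) (hra : 0 < ra) (hγs : 0 < γs) (hγsγ : γs < γ)
    (htarget : ra < infDist (0 : E3) O)
    (Rl : Set E3)
    (hRl : Rl = {x : E3 | (ra ≤ infDist x O ∧ infDist x O ≤ ra + γ) ∧
      (segment ℝ 0 x ∩ interior {y : E3 | infDist y O ≤ ra}).Nonempty})
    (Re : Set E3)
    (hRe : Re = {x : E3 | ra ≤ infDist x O ∧ infDist x O ≤ ra + γ} \ Rl)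
    (F0 : Set E3) (hF0 : F0 = {x : E3 | ra + γs ≤ infDist x O} ∪ Re)
    (J0 : Set E3)
    (hJ0 : J0 = closure ({x : E3 | ra ≤ infDist x O ∧ infDist x O ≤ ra + γs} ∩ Rl)) :
    F0 ∪ J0 = {x : E3 | ra ≤ infDist x O} :=
  stmt9_general O ra γs γ hγs hγsγ Rl hRl Re hRe F0 hF0 J0 hJ0
end

section
/- Let O ⊆ ℝ³ be a nonempty compact convex set, r > 0 with infDist 0 O > r, let a ∈ ℝ³ with ‖a‖ = 1, and let H := {x ∈ ℝ³ : ⟪a, x⟫ = 0} be the hyperplane through the target 0 orthogonal to a. Assume the slice C := H ∩ D_r(O) is nonempty, and let p ∈ C be a point with ‖p‖ = infDist 0 C (a nearest point of C to the origin). Then the segment [0,p] does not meet the open dilation {y ∈ ℝ³ : infDist y O < r}; in particular, the line segment from the target to the nearest point of the slice stays outside the open r-dilated obstacle. (This is the claim LS ⊆ exit region used in the proof of claim 3 of Lemma 4.) -/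
open Metric Set Filter Topology
open scoped RealInnerProductSpace

/-!
If some point `t • p` of `[0, p]` lay in the open dilation, then so would `s • p` for every `s`
slightly below `t`; such a point still lies in the hyperplane (hence in the slice) and is
strictly shorter than `p`, contradicting the minimality of `‖p‖`.
-/

section Segment

variable {E : Type*} [NormedAddCommGroup E] [NormedSpace ℝ E]

lemma exists_smul_mem_of_isOpen_norm_lt {U : Set E} (hU : IsOpen U) {p : E} (hp : p ≠ 0)
    {t : ℝ} (ht0 : 0 ≤ t) (ht1 : t ≤ 1) (htU : t • p ∈ U) :
    ∃ s : ℝ, s • p ∈ U ∧ ‖s • p‖ < ‖p‖ := by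
  have hcont : Tendsto (fun s : ℝ => s • p) (𝓝[<] t) (𝓝 (t • p)) :=
    ((continuous_id.smul continuous_const).tendsto t).mono_left nhdsWithin_le_nhds
  have hgt : ∀ᶠ s in 𝓝[<] t, -1 < s :=
    nhdsWithin_le_nhds (Ioi_mem_nhds (by linarith))
  obtain ⟨s, ⟨hsU, hs_gt⟩, hs_lt⟩ :=
    (((hcont.eventually (hU.mem_nhds htU)).and hgt).and self_mem_nhdsWithin).exists
  refine ⟨s, hsU, ?_⟩
  have hs : |s| < 1 := abs_lt.2 ⟨hs_gt, lt_of_lt_of_le hs_lt ht1⟩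
  rw [norm_smul, Real.norm_eq_abs]
  exact mul_lt_of_lt_one_left (norm_pos_iff.2 hp) hs

lemma segment_zero_inter_eq_empty_of_norm_le {H : Submodule ℝ E} {U : Set E} (hU : IsOpen U)
    {p : E} (hpH : p ∈ H) (hp : p ≠ 0) (hmin : ∀ x ∈ H, x ∈ U → ‖p‖ ≤ ‖x‖) :
    segment ℝ 0 p ∩ U = ∅ := by
  refine eq_empty_iff_forall_notMem.2 ?_
  rintro _ ⟨⟨u, t, hu, ht, hut, rfl⟩, htU⟩
  rw [smul_zero, zero_add] at htU
  obtain ⟨s, hsU, hs⟩ := exists_smul_mem_of_isOpen_norm_lt hU hp ht (by linarith) htU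
  exact (hmin _ (H.smul_mem s hpH) hsU).not_gt hs

end Segment

theorem stmt10_general (O : Set E3)
    (r : ℝ) (htarget : r < infDist (0 : E3) O)
    (a : E3)
    (C : Set E3) (hC : C = {x : E3 | ⟪a, x⟫ = 0} ∩ {x : E3 | infDist x O ≤ r})
    (p : E3) (hpC : p ∈ C) (hpmin : ‖p‖ = infDist (0 : E3) C) :
    segment ℝ 0 p ∩ {y : E3 | infDist y O < r} = ∅ := by
  rw [hC] at hpC
  have hp0 : p ≠ 0 := by
    rintro rfl
    exact hpC.2.not_gt htarget
  refine segment_zero_inter_eq_empty_of_norm_le (H := (ℝ ∙ a)ᗮ)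
    (isOpen_lt (continuous_infDist_pt O) continuous_const)
    (Submodule.mem_orthogonal_singleton_iff_inner_right.2 hpC.1) hp0 ?_
  intro x hxH hxU
  have hxC : x ∈ C := hC ▸
    ⟨Submodule.mem_orthogonal_singleton_iff_inner_right.1 hxH, (le_of_lt hxU : infDist x O ≤ r)⟩
  simpa [hpmin] using infDist_le_dist_of_mem (x := (0 : E3)) hxC

/-- Claim `LS ⊆ exit region` used in the proof of claim 3 of Lemma 4: if `p` is a
nearest point to the origin of the slice `C = H ∩ D_r(O)` of the dilated obstacle by the
hyperplane `H` through the target orthogonal to `a`, then the segment `[0,p]` does not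
meet the open dilation `{y : infDist y O < r}`. -/
theorem stmt10 (O : Set E3) (hOne : O.Nonempty) (hOcomp : IsCompact O) (hOconv : Convex ℝ O)
    (r : ℝ) (hr : 0 < r) (htarget : r < infDist (0 : E3) O)
    (a : E3) (ha : ‖a‖ = 1)
    (C : Set E3) (hC : C = {x : E3 | ⟪a, x⟫ = 0} ∩ {x : E3 | infDist x O ≤ r})
    (hCne : C.Nonempty)
    (p : E3) (hpC : p ∈ C) (hpmin : ‖p‖ = infDist (0 : E3) C) :
    segment ℝ 0 p ∩ {y : E3 | infDist y O < r} = ∅ :=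
  stmt10_general O r htarget a C hC p hpC hpmin
end
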